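/- Two normalized disjunctive multiplicity expressions E_1 and E_2 define the same language of unordered words if and only if C_{E_1} = C_{E_2}, N_{E_1} = N_{E_2}, and P_{E_1} = P_{E_2}. -/

import Mathlib

open scoped Classical

variable {α : Type}

/-- Unordered words: multisets of symbols, as occurrence-count functions. -/
abbrev UWord (α : Type) := α → ℕ

/-- Multiplicities `*`, `+`, `?`, `0`, `1`. -/
inductive Mult : Type where
  | zero | one | opt | plus | star
deriving DecidableEq

/-- Interpretation of multiplicities as sets of natural numbers. -/
def Mult.sem : Mult → Set ℕ
  | .zero => {0}
  | .one => {1}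
  | .opt => {0, 1}
  | .plus => {n | 0 < n}
  | .star => Set.univ

/-- A disjunction `a₁^{M₁} | … | a_k^{M_k}`. -/
abbrev Disj (α : Type) := List (α × Mult)

/-- A disjunctive multiplicity expression `D₁^{M₁} ⊎ … ⊎ D_n^{M_n}`. -/
abbrev DME (α : Type) := List (Disj α × Mult)

/-- Language of `a^M`. -/
def singleLang (a : α) (m : Mult) : Set (UWord α) :=
  {w | w a ∈ m.sem ∧ ∀ b, b ≠ a → w b = 0}

/-- Language of a disjunction. -/
def disjLang (D : Disj α) : Set (UWord α) :=
  {w | ∃ p ∈ D, w ∈ singleLang p.1 p.2}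

/-- Pointwise (multiset) sum of a list of unordered words. -/
def sumWords (ws : List (UWord α)) : UWord α := fun a => (ws.map (fun u => u a)).sum

/-- Language of `D^M`. -/
def powLang (L : Set (UWord α)) (m : Mult) : Set (UWord α) :=
  {w | ∃ ws : List (UWord α), ws.length ∈ m.sem ∧ (∀ u ∈ ws, u ∈ L) ∧ w = sumWords ws}

/-- Language of a disjunctive multiplicity expression. -/
def dmeLang (E : DME α) : Set (UWord α) :=
  {w | ∃ ws : List (UWord α),
      List.Forall₂ (fun p u => u ∈ powLang (disjLang p.1) p.2) E ws ∧ w = sumWords ws}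

/-- Symbols occurring in a disjunctive multiplicity expression. -/
def dmeSymbols (E : DME α) : List α := E.flatMap (fun p => p.1.map Prod.fst)

/-- Normalized disjunctive multiplicity expression (each symbol occurs at most once,
each disjunction nonempty, and the two normal-form conditions of the paper). -/
def Normalized (E : DME α) : Prop :=
  (dmeSymbols E).Nodup ∧
  ∀ p ∈ E, p.1 ≠ [] ∧
    (p.2 ≠ Mult.one → p.2 = Mult.plus ∧ ∀ q ∈ p.1, q.2 = Mult.one) ∧
    ((∃ q ∈ p.1, (0 : ℕ) ∈ q.2.sem) → ∀ q ∈ p.1, (0 : ℕ) ∈ q.2.sem)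

/-- Conflicting pairs of siblings `C_E`. -/
def CE (E : DME α) : Set (α × α) :=
  {p | ¬ ∃ w ∈ dmeLang E, w p.1 ≠ 0 ∧ w p.2 ≠ 0}

/-- Extended cardinality map `N_E`. -/
def NE (E : DME α) : Set (α × ℕ) :=
  {p | ∃ w ∈ dmeLang E, w p.1 = p.2}

/-- Sets of required symbols `P_E`. -/
def PE (E : DME α) : Set (Set α) :=
  {X | ∀ w ∈ dmeLang E, ∃ a ∈ X, w a ≠ 0}

/-- Consistency of an unordered word with a characterizing triple. -/
def ConsTriple (w : UWord α) (C : Set (α × α)) (N : Set (α × ℕ)) (P : Set (Set α)) : Prop :=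
  (∀ p ∈ C, ¬ (w p.1 ≠ 0 ∧ w p.2 ≠ 0)) ∧
  (∀ a, (a, w a) ∈ N) ∧
  (∀ X ∈ P, ∃ a ∈ X, w a ≠ 0)

/-- Language of a disjunction-free multiplicity expression given as a list of
symbol/multiplicity pairs. -/
def dfLang (l : List (α × Mult)) : Set (UWord α) :=
  {w | (∀ p ∈ l, w p.1 ∈ p.2.sem) ∧ ∀ b, b ∉ l.map Prod.fst → w b = 0}

/-- Finite unordered trees. -/
inductive UTree (α : Type) : Type where
  | node : α → List (UTree α) → UTree α

def UTree.lab : UTree α → α | .node a _ => a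

def UTree.children : UTree α → List (UTree α) | .node _ ts => ts

/-- Twig queries: labels in `Σ ∪ {⋆}` (wildcard = `none`); each child subquery is tagged
with `false` for a child edge and `true` for a descendant edge. -/
inductive Twig (α : Type) : Type where
  | node : Option α → List (Twig α × Bool) → Twig α

/-- Proper subtree (proper descendant) relation. -/
inductive StrictDesc : UTree α → UTree α → Prop where
  | child {s t : UTree α} : s ∈ t.children → StrictDesc s t
  | step {s u t : UTree α} : StrictDesc s u → u ∈ t.children → StrictDesc s t

/-- `Sat t q`: the twig query `q` can be embedded in the tree `t`
(root to root, child edges to child edges, descendant edges to proper descendants,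
labels preserved up to wildcard). -/
def Sat : UTree α → Twig α → Prop
  | t, .node l qs =>
      (∀ x ∈ l, x = t.lab) ∧
      ∀ p ∈ qs, (p.2 = false → ∃ t' ∈ t.children, Sat t' p.1) ∧
                (p.2 = true → ∃ t', StrictDesc t' t ∧ Sat t' p.1)
termination_by t q => sizeOf q
decreasing_by
  all_goals
    obtain ⟨q', b'⟩ := p
    have h1 : sizeOf ((q', b') : Twig α × Bool) < sizeOf qs := List.sizeOf_lt_of_mem (by assumption)
    simp at h1 ⊢
    omega

/-- `TEmb t' t` : the tree `t'` can be embedded in the tree `t` (root-, child-, and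
label-preserving). -/
def TEmb : UTree α → UTree α → Prop
  | .node a ts', t => t.lab = a ∧ ∀ s' ∈ ts', ∃ s ∈ t.children, TEmb s' s

/-- `QGEmb E a q` : the twig query `q` can be embedded in the rooted graph with edge
relation `E` at root `a`. -/
def QGEmb (E : α → α → Prop) : α → Twig α → Prop
  | a, .node l qs =>
      (∀ x ∈ l, x = a) ∧
      ∀ p ∈ qs, (p.2 = false → ∃ b, E a b ∧ QGEmb E b p.1) ∧
                (p.2 = true → ∃ b, Relation.TransGen E a b ∧ QGEmb E b p.1)
termination_by a q => sizeOf q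
decreasing_by
  all_goals
    obtain ⟨q', b'⟩ := p
    have h1 : sizeOf ((q', b') : Twig α × Bool) < sizeOf qs := List.sizeOf_lt_of_mem (by assumption)
    simp at h1 ⊢
    omega

/-- Labeled paths of a tree: sequences of labels along root-to-node paths. -/
inductive IsLabPath : UTree α → List α → Prop where
  | root {a : α} {ts : List (UTree α)} : IsLabPath (UTree.node a ts) [a]
  | cons {a : α} {ts : List (UTree α)} {s : UTree α} {p : List α} :
      s ∈ ts → IsLabPath s p → IsLabPath (UTree.node a ts) (a :: p)

/-- Paths of a rooted graph: nonempty vertex sequences starting at the root and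
following edges. -/
def IsGPath (E : α → α → Prop) (root : α) (p : List α) : Prop :=
  p ≠ [] ∧ p.head? = some root ∧ p.Chain' E

/-- The unfolding of a rooted graph, truncated at depth `n`.  For a graph with no cycle
reachable from the root, taking `n = Fintype.card α` yields the full unfolding. -/
noncomputable def unfoldG [Fintype α] (E : α → α → Prop) : ℕ → α → UTree α
  | 0, a => .node a []
  | n + 1, a => .node a (((Finset.univ.filter fun b => E a b).toList).map (unfoldG E n))

/-- Number of leaves of a tree. -/
def leafCount : UTree α → ℕ
  | .node _ ts => if ts.isEmpty then 1 else (ts.attach.map (fun s => leafCount s.1)).sum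
decreasing_by
  have h1 := List.sizeOf_lt_of_mem s.2
  simp
  omega

/-- Disjunction-free multiplicity schema: a root label together with, for each label `a`,
a disjunction-free multiplicity expression given as the multiplicity `R a b` of every
symbol `b` (`Mult.zero` meaning `b` does not occur). -/
structure MS (α : Type) where
  root : α
  R : α → α → Mult

/-- Every node's children-label multiset matches the rule for the node's label. -/
inductive LocalOK [DecidableEq α] (R : α → α → Mult) : UTree α → Prop where
  | node {a : α} {ts : List (UTree α)} :
      (∀ b, ((ts.map UTree.lab).count b) ∈ (R a b).sem) →
      (∀ s ∈ ts, LocalOK R s) →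
      LocalOK R (UTree.node a ts)

/-- A tree satisfies a disjunction-free multiplicity schema. -/
def SatS [DecidableEq α] (S : MS α) (t : UTree α) : Prop :=
  t.lab = S.root ∧ LocalOK S.R t

/-- Edges of the universal dependency graph: `b` occurs in `R a` with multiplicity `+` or `1`. -/
def uEdge (S : MS α) (a b : α) : Prop := S.R a b = Mult.plus ∨ S.R a b = Mult.one

/-- Edges of the dependency graph: `b` occurs in `R a` with multiplicity in `{*,+,?,1}`. -/
def dEdge (S : MS α) (a b : α) : Prop := S.R a b ≠ Mult.zero

/-- A simulation of the rooted graph `(α, root, E)` in the tree `t`. -/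
def IsSimulation (E : α → α → Prop) (root : α) (t : UTree α) (R : α → UTree α → Prop) : Prop :=
  R root t ∧ (∀ a s, R a s → s.lab = a) ∧
  (∀ a s, R a s → ∀ b, E a b → ∃ s' ∈ s.children, R b s')

/-- One fuse step: two sibling nodes with the same label are merged into a single node
whose children are the children of both (applied anywhere in the tree). -/
inductive Fuse : UTree α → UTree α → Prop where
  | here {a b : α} {l₁ l₂ l₃ cs₁ cs₂ : List (UTree α)} :
      Fuse (UTree.node a (l₁ ++ UTree.node b cs₁ :: l₂ ++ UTree.node b cs₂ :: l₃))
           (UTree.node a (l₁ ++ UTree.node b (cs₁ ++ cs₂) :: l₂ ++ l₃))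
  | there {a : α} {s s' : UTree α} {l₁ l₂ : List (UTree α)} :
      Fuse s s' → Fuse (UTree.node a (l₁ ++ s :: l₂)) (UTree.node a (l₁ ++ s' :: l₂))

/-- One add step: an arbitrary new subtree is attached as an additional child of some
node of the tree. -/
inductive AddOp : UTree α → UTree α → Prop where
  | here {a : α} {s : UTree α} {l : List (UTree α)} :
      AddOp (UTree.node a l) (UTree.node a (s :: l))
  | there {a : α} {s s' : UTree α} {l₁ l₂ : List (UTree α)} :
      AddOp s s' → AddOp (UTree.node a (l₁ ++ s :: l₂)) (UTree.node a (l₁ ++ s' :: l₂))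

/-!
For normalized `E` the language `dmeLang E` is exactly the set of words consistent with the
triple `(CE E, NE E, PE E)`; since the triple is determined by the language, the equivalence
follows. Consistency of the words of `E` is immediate. Conversely, as distinct disjunctions of
`E` use disjoint symbols, a word lies in `dmeLang E` iff it is supported on the symbols of `E`
and its restriction to the symbols of each disjunction `D^M` lies in the language of `D^M`, where
`M` is `1` or `+` by normality. For `M = 1`, `CE E` leaves at most one symbol of `D` present,
`NE E` makes its count admissible, and `PE E` rules out the empty restriction unless some
alternative admits `0`. For `M = +` all alternatives have multiplicity `1`, so `D^+` is the set
of nonzero words over the symbols of `D`, and `PE E` makes the restriction nonzero.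
-/

open Function Set

def disjSymbols (D : Disj α) : Set α := {a | a ∈ D.map Prod.fst}

def dmeSymbolSet (E : DME α) : Set α := {a | a ∈ dmeSymbols E}

lemma sumWords_eq_sum (ws : List (UWord α)) : sumWords ws = ws.sum :=
  funext fun a => (Pi.list_sum_apply a ws).symm

lemma mem_dmeLang_nil {w : UWord α} : w ∈ dmeLang ([] : DME α) ↔ w = 0 := by
  simp [dmeLang, sumWords_eq_sum]

lemma mem_dmeLang_cons {p : Disj α × Mult} {E : DME α} {w : UWord α} :
    w ∈ dmeLang (p :: E) ↔
      ∃ u ∈ powLang (disjLang p.1) p.2, ∃ v ∈ dmeLang E, w = u + v := by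
  constructor
  · rintro ⟨_ | ⟨u, ws⟩, h, rfl⟩
    · cases h
    · obtain ⟨hu, hws⟩ := List.forall₂_cons.1 h
      exact ⟨u, hu, _, ⟨ws, hws, rfl⟩, by simp [sumWords_eq_sum]⟩
  · rintro ⟨u, hu, v, ⟨ws, hws, rfl⟩, rfl⟩
    exact ⟨u :: ws, .cons hu hws, by simp [sumWords_eq_sum]⟩

lemma dmeSymbolSet_cons (p : Disj α × Mult) (E : DME α) :
    dmeSymbolSet (p :: E) = disjSymbols p.1 ∪ dmeSymbolSet E := by
  ext a; simp [dmeSymbolSet, disjSymbols, dmeSymbols]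

lemma disjSymbols_subset_dmeSymbolSet {E : DME α} {p : Disj α × Mult} (hp : p ∈ E) :
    disjSymbols p.1 ⊆ dmeSymbolSet E :=
  fun _ ha => List.mem_flatMap.2 ⟨p, hp, ha⟩

lemma support_subset_of_mem_disjLang {D : Disj α} {u : UWord α} (hu : u ∈ disjLang D) :
    support u ⊆ disjSymbols D := by
  obtain ⟨q, hq, -, hzero⟩ := hu
  intro a ha
  by_cases h : a = q.1
  · exact List.mem_map.2 ⟨q, hq, h.symm⟩
  · exact absurd (hzero a h) ha

lemma support_list_sum_subset {ι M : Type*} [AddMonoid M] {ws : List (ι → M)} {S : Set ι}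
    (h : ∀ v ∈ ws, support v ⊆ S) :
    support ws.sum ⊆ S := by
  induction ws with
  | nil => simp
  | cons v ws ih =>
    rw [List.sum_cons]
    exact (support_add _ _).trans
      (union_subset (h v (by simp)) (ih fun v hv => h v (by simp [hv])))

lemma support_subset_of_mem_powLang {L : Set (UWord α)} {m : Mult} {S : Set α}
    (hL : ∀ v ∈ L, support v ⊆ S) {u : UWord α} (hu : u ∈ powLang L m) : support u ⊆ S := by
  obtain ⟨ws, -, hws, rfl⟩ := hu
  rw [sumWords_eq_sum]
  exact support_list_sum_subset fun v hv => hL v (hws v hv)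
lemma support_subset_of_mem_powLang_disjLang {D : Disj α} {m : Mult} {u : UWord α}
    (hu : u ∈ powLang (disjLang D) m) : support u ⊆ disjSymbols D :=
  support_subset_of_mem_powLang (fun _ => support_subset_of_mem_disjLang) hu

lemma support_subset_of_mem_dmeLang {E : DME α} {w : UWord α} (hw : w ∈ dmeLang E) :
    support w ⊆ dmeSymbolSet E := by
  induction E generalizing w with
  | nil => simp [mem_dmeLang_nil.1 hw]
  | cons p E ih =>
    obtain ⟨u, hu, v, hv, rfl⟩ := mem_dmeLang_cons.1 hw
    rw [dmeSymbolSet_cons]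
    exact (support_add _ _).trans
      (union_subset_union (support_subset_of_mem_powLang_disjLang hu) (ih hv))

lemma disjoint_disjSymbols_of_nodup_cons {p : Disj α × Mult} {E : DME α}
    (hnd : (dmeSymbols (p :: E)).Nodup) : Disjoint (disjSymbols p.1) (dmeSymbolSet E) := by
  rw [dmeSymbols, List.flatMap_cons, List.nodup_append] at hnd
  exact Set.disjoint_left.2 fun a ha ha' => hnd.2.2 a ha a ha' rfl

lemma nodup_of_nodup_cons {p : Disj α × Mult} {E : DME α}
    (hnd : (dmeSymbols (p :: E)).Nodup) : (dmeSymbols E).Nodup :=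
  (List.nodup_append.1 (by simpa [dmeSymbols] using hnd)).2.1

lemma mem_dmeLang_iff {E : DME α} (hnd : (dmeSymbols E).Nodup) {w : UWord α} :
    w ∈ dmeLang E ↔ support w ⊆ dmeSymbolSet E ∧
      ∀ p ∈ E, (disjSymbols p.1).indicator w ∈ powLang (disjLang p.1) p.2 := by
  induction E generalizing w with
  | nil => simp [mem_dmeLang_nil, dmeSymbolSet, dmeSymbols]
  | cons p E ih =>
    have hdisj := disjoint_disjSymbols_of_nodup_cons hnd
    simp only [mem_dmeLang_cons, dmeSymbolSet_cons, List.forall_mem_cons,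
      ih (nodup_of_nodup_cons hnd)]
    constructor
    · rintro ⟨u, hu, v, ⟨hvE, hvq⟩, rfl⟩
      have huS := support_subset_of_mem_powLang_disjLang hu
      refine ⟨(support_add _ _).trans (union_subset_union huS hvE), ?_, fun q hq => ?_⟩
      · rwa [indicator_add', indicator_eq_self.2 huS,
          indicator_eq_zero'.2 ((hdisj.mono_right hvE).symm), add_zero]
      · rw [indicator_add', indicator_eq_zero'.2 (hdisj.mono huS (disjSymbols_subset_dmeSymbolSet hq)), zero_add]
        exact hvq q hq
    · rintro ⟨hw, hwp, hwq⟩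
      refine ⟨_, hwp, (disjSymbols p.1)ᶜ.indicator w, ⟨?_, fun q hq => ?_⟩,
        (indicator_self_add_compl _ w).symm⟩
      · rw [support_indicator]
        exact fun a ⟨haS, haw⟩ => (hw haw).resolve_left haS
      · rw [indicator_indicator, inter_eq_left.2 ((disjSymbols_subset_dmeSymbolSet hq).trans hdisj.subset_compl_left)]
        exact hwq q hq

lemma powLang_one (L : Set (UWord α)) : powLang L Mult.one = L := by
  ext u
  constructor
  · rintro ⟨ws, hlen, hws, rfl⟩
    obtain ⟨v, rfl⟩ := List.length_eq_one_iff.1 hlen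
    simpa [sumWords_eq_sum] using hws
  · intro hu
    exact ⟨[u], rfl, by simpa using hu, by simp [sumWords_eq_sum]⟩

lemma powLang_star_eq_closure (L : Set (UWord α)) :
    powLang L Mult.star = AddSubmonoid.closure L := by
  ext u
  constructor
  · rintro ⟨ws, -, hws, rfl⟩
    rw [sumWords_eq_sum]
    exact list_sum_mem fun v hv => AddSubmonoid.subset_closure (hws v hv)
  · intro hu
    obtain ⟨ws, hws, rfl⟩ := AddSubmonoid.exists_list_of_mem_closure hu
    exact ⟨ws, trivial, hws, (sumWords_eq_sum ws).symm⟩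

lemma mem_powLang_plus_of_mem_closure {L : Set (UWord α)} {u : UWord α}
    (hu : u ∈ AddSubmonoid.closure L) (hu0 : u ≠ 0) : u ∈ powLang L Mult.plus := by
  have hu' : u ∈ powLang L Mult.star := by rwa [powLang_star_eq_closure]
  obtain ⟨ws, -, hws, rfl⟩ := hu'
  refine ⟨ws, List.length_pos_iff.2 ?_, hws, rfl⟩
  rintro rfl
  exact hu0 (by simp [sumWords_eq_sum])

lemma eq_sum_pi_single_of_support_subset {u : UWord α} {s : Finset α}
    (hu : support u ⊆ s) : u = ∑ a ∈ s, Pi.single a (u a) := by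
  funext b
  rw [Finset.sum_apply, Finset.sum_pi_single]
  split_ifs with hb
  · rfl
  · exact notMem_support.1 fun h => hb (hu h)

lemma exists_ne_zero_of_mem_powLang_plus {L : Set (UWord α)} {S : Set α}
    (hL : ∀ v ∈ L, ∃ a ∈ S, v a ≠ 0) {u : UWord α} (hu : u ∈ powLang L Mult.plus) :
    ∃ a ∈ S, u a ≠ 0 := by
  obtain ⟨ws, hlen, hws, rfl⟩ := hu
  obtain ⟨v, hv⟩ := List.exists_mem_of_length_pos hlen
  obtain ⟨a, haS, ha⟩ := hL v (hws v hv)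
  refine ⟨a, haS, fun h => ha (Nat.eq_zero_of_le_zero ?_)⟩
  rw [← h, sumWords_eq_sum]
  exact List.le_sum_of_mem hv a

lemma mem_powLang_plus_iff {D : Disj α} (hD : ∀ q ∈ D, q.2 = Mult.one) {u : UWord α} :
    u ∈ powLang (disjLang D) Mult.plus ↔
      support u ⊆ disjSymbols D ∧ ∃ a ∈ disjSymbols D, u a ≠ 0 := by
  refine ⟨fun hu => ⟨support_subset_of_mem_powLang_disjLang hu, ?_⟩, ?_⟩
  · refine exists_ne_zero_of_mem_powLang_plus (fun v hv => ?_) hu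
    obtain ⟨q, hq, hvq, -⟩ := hv
    rw [hD q hq, Mult.sem, mem_singleton_iff] at hvq
    exact ⟨q.1, List.mem_map_of_mem hq, by omega⟩
  · rintro ⟨hsupp, a, -, ha⟩
    refine mem_powLang_plus_of_mem_closure ?_ (fun h => ha (congrFun h a))
    rw [eq_sum_pi_single_of_support_subset (s := (D.map Prod.fst).toFinset)
      (fun b hb => List.mem_toFinset.2 (hsupp hb))]
    refine sum_mem fun b hb => ?_
    obtain ⟨q, hq, rfl⟩ := List.mem_map.1 (List.mem_toFinset.1 hb)
    have hsingle : Pi.single q.1 1 ∈ disjLang D :=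
      ⟨q, hq, by simp [hD q hq, Mult.sem], fun b hb => Pi.single_eq_of_ne hb 1⟩
    rw [← mul_one (u q.1), ← smul_eq_mul, Pi.single_smul]
    exact nsmul_mem (AddSubmonoid.subset_closure hsingle) _

lemma eq_of_mem_disjLang {D : Disj α} {u : UWord α} (hu : u ∈ disjLang D) {a b : α}
    (ha : u a ≠ 0) (hb : u b ≠ 0) : a = b := by
  obtain ⟨q, -, -, hzero⟩ := hu
  exact (not_not.1 (mt (hzero a) ha)).trans (not_not.1 (mt (hzero b) hb)).symm

lemma mem_sem_of_mem_disjLang {D : Disj α} (hD : (D.map Prod.fst).Nodup) {u : UWord α}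
    (hu : u ∈ disjLang D) {q : α × Mult} (hq : q ∈ D) (huq : u q.1 ≠ 0) : u q.1 ∈ q.2.sem := by
  obtain ⟨r, hr, hur, hzero⟩ := hu
  obtain rfl : q = r := List.inj_on_of_nodup_map hD hq hr (not_not.1 (mt (hzero q.1) huq))
  exact hur

lemma nodup_map_fst_of_mem {E : DME α} (hnd : (dmeSymbols E).Nodup) {p : Disj α × Mult}
    (hp : p ∈ E) : (p.1.map Prod.fst).Nodup :=
  (List.nodup_flatMap.1 hnd).1 p hp

lemma consTriple_of_mem_dmeLang {E : DME α} {w : UWord α} (hw : w ∈ dmeLang E) :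
    ConsTriple w (CE E) (NE E) (PE E) :=
  ⟨fun _ hC h => hC ⟨w, hw, h⟩, fun _ => ⟨w, hw, rfl⟩, fun _ hP => hP w hw⟩

section Completeness

variable {E : DME α} {p : Disj α × Mult} {w : UWord α}

lemma indicator_mem_powLang_of_mem_dmeLang (hnd : (dmeSymbols E).Nodup) (hp : p ∈ E)
    (hw : w ∈ dmeLang E) :
    (disjSymbols p.1).indicator w ∈ powLang (disjLang p.1) p.2 :=
  ((mem_dmeLang_iff hnd).1 hw).2 p hp

lemma exists_ne_zero_of_consTriple (hnd : (dmeSymbols E).Nodup) (hp : p ∈ E)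
    (hw : ConsTriple w (CE E) (NE E) (PE E))
    (h0 : 0 ∉ powLang (disjLang p.1) p.2) : ∃ a ∈ disjSymbols p.1, w a ≠ 0 := by
  refine hw.2.2 _ fun w' hw' => ?_
  have hu := indicator_mem_powLang_of_mem_dmeLang hnd hp hw'
  have hu0 : (disjSymbols p.1).indicator w' ≠ 0 := fun h => h0 (h ▸ hu)
  obtain ⟨a, ha⟩ := Function.ne_iff.1 hu0
  have haS := mem_of_indicator_ne_zero ha
  exact ⟨a, haS, by rwa [indicator_of_mem haS] at ha⟩

lemma mem_CE_of_mult_eq_one (hnd : (dmeSymbols E).Nodup) (hp : p ∈ E)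
    (hone : p.2 = Mult.one) {a b : α} (ha : a ∈ disjSymbols p.1)
    (hb : b ∈ disjSymbols p.1) (hab : a ≠ b) : (a, b) ∈ CE E := by
  rintro ⟨w', hw', hwa, hwb⟩
  have hu := indicator_mem_powLang_of_mem_dmeLang hnd hp hw'
  rw [hone, powLang_one] at hu
  exact hab (eq_of_mem_disjLang hu (by rwa [indicator_of_mem ha])
    (by rwa [indicator_of_mem hb]))

lemma mem_sem_of_mem_NE (hnd : (dmeSymbols E).Nodup) (hp : p ∈ E)
    (hone : p.2 = Mult.one) {q : α × Mult} (hq : q ∈ p.1) {n : ℕ}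
    (hn : n ≠ 0) (hN : (q.1, n) ∈ NE E) : n ∈ q.2.sem := by
  obtain ⟨w', hw', hwq⟩ := hN
  change w' q.1 = n at hwq
  subst hwq
  have hu := indicator_mem_powLang_of_mem_dmeLang hnd hp hw'
  rw [hone, powLang_one] at hu
  have hqS : q.1 ∈ disjSymbols p.1 := List.mem_map_of_mem hq
  have hsem := mem_sem_of_mem_disjLang (nodup_map_fst_of_mem hnd hp) hu hq
  rw [indicator_of_mem hqS] at hsem
  exact hsem hn

lemma indicator_mem_disjLang_of_consTriple (hnd : (dmeSymbols E).Nodup) (hp : p ∈ E)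
    (hone : p.2 = Mult.one) (hw : ConsTriple w (CE E) (NE E) (PE E)) :
    (disjSymbols p.1).indicator w ∈ disjLang p.1 := by
  by_cases hex : ∃ a ∈ disjSymbols p.1, w a ≠ 0
  · obtain ⟨_, hqS, hwq⟩ := hex
    obtain ⟨q, hq, rfl⟩ := List.mem_map.1 hqS
    refine ⟨q, hq, ?_, fun b hb => ?_⟩
    · rw [indicator_of_mem hqS]
      exact mem_sem_of_mem_NE hnd hp hone hq hwq (hw.2.1 q.1)
    · by_cases hbS : b ∈ disjSymbols p.1
      · rw [indicator_of_mem hbS]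
        by_contra hwb
        exact hw.1 _ (mem_CE_of_mult_eq_one hnd hp hone hqS hbS (Ne.symm hb)) ⟨hwq, hwb⟩
      · exact indicator_of_notMem hbS w
  · push Not at hex
    rw [indicator_eq_zero'.2 (Set.disjoint_left.2 fun a ha haS => ha (hex a haS))]
    by_contra h0
    rw [← powLang_one (disjLang p.1), ← hone] at h0
    obtain ⟨a, haS, ha⟩ := exists_ne_zero_of_consTriple hnd hp hw h0
    exact ha (hex a haS)

lemma indicator_mem_powLang_plus_of_consTriple (hnd : (dmeSymbols E).Nodup) (hp : p ∈ E)
    (hinner : ∀ q ∈ p.1, q.2 = Mult.one) (hplus : p.2 = Mult.plus)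
    (hw : ConsTriple w (CE E) (NE E) (PE E)) :
    (disjSymbols p.1).indicator w ∈ powLang (disjLang p.1) Mult.plus := by
  have h0 : 0 ∉ powLang (disjLang p.1) p.2 := by
    rw [hplus, mem_powLang_plus_iff hinner]
    rintro ⟨-, a, -, ha⟩
    exact ha rfl
  obtain ⟨a, haS, ha⟩ := exists_ne_zero_of_consTriple hnd hp hw h0
  rw [mem_powLang_plus_iff hinner]
  exact ⟨support_indicator_subset, a, haS, by rwa [indicator_of_mem haS]⟩

end Completeness

lemma support_subset_of_consTriple {E : DME α} {w : UWord α}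
    (hw : ConsTriple w (CE E) (NE E) (PE E)) : support w ⊆ dmeSymbolSet E := by
  intro a ha
  obtain ⟨w', hw', hwa⟩ := hw.2.1 a
  exact support_subset_of_mem_dmeLang hw' (show w' a ≠ 0 from hwa ▸ ha)

theorem dmeLang_eq_setOf_consTriple {E : DME α} (hE : Normalized E) :
    dmeLang E = {w | ConsTriple w (CE E) (NE E) (PE E)} := by
  ext w
  refine ⟨consTriple_of_mem_dmeLang, fun hw => (mem_dmeLang_iff hE.1).2
    ⟨support_subset_of_consTriple hw, fun p hp => ?_⟩⟩
  obtain ⟨-, hmult, -⟩ := hE.2 p hp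
  by_cases hone : p.2 = Mult.one
  · rw [hone, powLang_one]
    exact indicator_mem_disjLang_of_consTriple hE.1 hp hone hw
  · obtain ⟨hplus, hinner⟩ := hmult hone
    rw [hplus]
    exact indicator_mem_powLang_plus_of_consTriple hE.1 hp hinner hplus hw

/-- Corollary: two normalized disjunctive multiplicity expressions define
the same language iff they have the same characterizing triples. -/
theorem dme_equivalence_iff_equal_triples
    {α : Type} (E₁ E₂ : DME α) (h₁ : Normalized E₁) (h₂ : Normalized E₂) :
    dmeLang E₁ = dmeLang E₂ ↔
      (CE E₁ = CE E₂ ∧ NE E₁ = NE E₂ ∧ PE E₁ = PE E₂) := by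
  constructor
  · intro h
    simp only [CE, NE, PE, h, and_self]
  · rintro ⟨hC, hN, hP⟩
    rw [dmeLang_eq_setOf_consTriple h₁, dmeLang_eq_setOf_consTriple h₂, hC, hN, hP]
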